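/- Let A ∈ {0,1} with P(A = 1) = e ∈ (0,1], let Y satisfy E[Y | A = 1] = μ and Var(Y | A = 1) ≤ σ², and let φ be a constant with |φ − μ| ≤ δ. Then the AIPW pseudo-outcome ψ = φ + (A/e)·(Y − φ) satisfies Var(ψ) ≤ (σ² + δ²·(1−e)/e)·(1/e) ≤ (σ² + δ²)/e². -/

import Mathlib

open MeasureTheory ProbabilityTheory

lemma variance_affine {Ω : Type*} [MeasureSpace Ω] [IsProbabilityMeasure (ℙ : Measure Ω)]
    (a c : ℝ) {X : Ω → ℝ} (hX : MemLp X 2 ℙ) :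
    variance (fun ω => a + c * X ω) ℙ = c ^ 2 * variance X ℙ := by
  have hcX : MemLp (fun ω => c * X ω) 2 ℙ := hX.const_mul c
  have h1 : MemLp (fun ω => a + c * X ω) 2 ℙ := (memLp_const a).add hcX
  rw [variance_eq_sub h1, ← variance_const_mul c X, variance_eq_sub hcX]
  have hIX := hcX.integrable one_le_two
  have hIX2 := hcX.integrable_sq
  simp only [Pi.pow_apply]
  have e1 : ∫ ω, (a + c * X ω) ∂ℙ = a + ∫ ω, c * X ω ∂ℙ := by
    rw [integral_add (integrable_const a) hIX, integral_const]
    simp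
  have e2 : ∫ ω, (a + c * X ω) ^ 2 ∂ℙ
      = a ^ 2 + 2 * a * ∫ ω, c * X ω ∂ℙ + ∫ ω, (c * X ω) ^ 2 ∂ℙ := by
    have hexp : ∀ ω, (a + c * X ω) ^ 2 = (a ^ 2 + 2 * a * (c * X ω)) + (c * X ω) ^ 2 := by
      intro ω; ring
    simp_rw [hexp]
    have i1 : Integrable (fun ω => a ^ 2 + 2 * a * (c * X ω)) ℙ :=
      (integrable_const (a ^ 2)).add (hIX.const_mul (2 * a))
    rw [integral_add i1 hIX2,
      integral_add (integrable_const (a ^ 2)) (hIX.const_mul (2 * a)), integral_const,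
      integral_const_mul]
    simp
  rw [e1, e2]
  ring

/-- Variance bound for the AIPW pseudo-outcome `ψ = φ + (A/e)·(Y − φ)`:
`Var(ψ) ≤ (σ² + δ²·(1−e)/e)·(1/e) ≤ (σ² + δ²)/e²`. -/
theorem stmt_6 {Ω : Type*} [MeasureSpace Ω] [IsProbabilityMeasure (ℙ : Measure Ω)]
    (A Y : Ω → ℝ) (e μ σ δ φ : ℝ) (he0 : 0 < e) (he1 : e ≤ 1)
    (hA : ∀ ω, A ω = 0 ∨ A ω = 1)
    (hAmeas : Measurable A) (hYmeas : Measurable Y)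
    (he : ℙ {ω | A ω = 1} = ENNReal.ofReal e)
    (hμ : ∫ ω, Y ω ∂(ℙ[|{ω | A ω = 1}]) = μ)
    (hσ : variance Y (ℙ[|{ω | A ω = 1}]) ≤ σ ^ 2)
    (hδ : |φ - μ| ≤ δ) (hδ0 : 0 ≤ δ)
    (hL2 : MemLp (fun ω => A ω * Y ω) 2 ℙ) :
    variance (fun ω => φ + (A ω / e) * (Y ω - φ)) ℙ ≤ (σ ^ 2 + δ ^ 2 * (1 - e) / e) * (1 / e) ∧
    (σ ^ 2 + δ ^ 2 * (1 - e) / e) * (1 / e) ≤ (σ ^ 2 + δ ^ 2) / e ^ 2 := by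
  set S := {ω | A ω = 1} with hSdef
  have hS : MeasurableSet S := hAmeas (measurableSet_singleton 1)
  have hPSne : ℙ S ≠ 0 := by
    rw [he]
    simp [ENNReal.ofReal_eq_zero, not_le, he0]
  have hPStoReal : (ℙ S).toReal = e := by rw [he, ENNReal.toReal_ofReal he0.le]
  haveI : IsProbabilityMeasure (ℙ[|S]) := cond_isProbabilityMeasure hPSne
  -- Y is L² for the conditional measure
  have hae : (fun ω => A ω * Y ω) =ᵐ[(ℙ : Measure Ω).restrict S] Y := by
    filter_upwards [ae_restrict_mem hS] with ω hω
    have : A ω = 1 := hω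
    simp [this]
  have hYr : MemLp Y 2 ((ℙ : Measure Ω).restrict S) := (hL2.restrict S).ae_eq hae
  have hYc : MemLp Y 2 (ℙ[|S]) := by
    rw [ProbabilityTheory.cond]
    exact hYr.smul_measure (ENNReal.inv_ne_top.mpr hPSne)
  -- relation between integrals over restrict and cond
  have hint : ∀ f : Ω → ℝ, ∫ ω in S, f ω ∂ℙ = e * ∫ ω, f ω ∂(ℙ[|S]) := by
    intro f
    rw [ProbabilityTheory.cond, integral_smul_measure, smul_eq_mul, ← mul_assoc,
      ENNReal.toReal_inv, hPStoReal, mul_inv_cancel₀ he0.ne', one_mul]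
  -- Z := A * (Y - φ)
  set Z := fun ω => A ω * (Y ω - φ) with hZdef
  have hZind : ∀ ω, Z ω = S.indicator (fun ω => Y ω - φ) ω := by
    intro ω
    rcases hA ω with h | h
    · have hns : ω ∉ S := by simp [hSdef, h]
      simp [hZdef, h, Set.indicator_of_notMem hns]
    · have hs : ω ∈ S := h
      simp [hZdef, h, Set.indicator_of_mem hs]
  have hYφint : Integrable (fun ω => Y ω - φ) (ℙ[|S]) :=
    (hYc.integrable one_le_two).sub (integrable_const φ)
  have hEYφ : ∫ ω, (Y ω - φ) ∂(ℙ[|S]) = μ - φ := by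
    rw [integral_sub (hYc.integrable one_le_two) (integrable_const φ), hμ, integral_const]
    simp
  have hEZ : ∫ ω, Z ω ∂ℙ = e * (μ - φ) := by
    simp_rw [hZind]
    rw [integral_indicator hS, hint, hEYφ]
  have hEZ2 : ∫ ω, Z ω ^ 2 ∂ℙ = e * ∫ ω, (Y ω - φ) ^ 2 ∂(ℙ[|S]) := by
    have h2 : ∀ ω, Z ω ^ 2 = S.indicator (fun ω => (Y ω - φ) ^ 2) ω := by
      intro ω
      rw [hZind ω]
      by_cases h : ω ∈ S <;> simp [h]
    simp_rw [h2]
    rw [integral_indicator hS, hint]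
  have hvar : ∫ ω, (Y ω - φ) ^ 2 ∂(ℙ[|S]) = variance Y (ℙ[|S]) + (μ - φ) ^ 2 := by
    rw [variance_eq_sub hYc]
    simp only [Pi.pow_apply]
    have hexp : ∀ ω, (Y ω - φ) ^ 2 = Y ω ^ 2 + (-2 * φ * Y ω + φ ^ 2) := by intro ω; ring
    simp_rw [hexp]
    have i2 : Integrable (fun ω => -2 * φ * Y ω + φ ^ 2) (ℙ[|S]) :=
      ((hYc.integrable one_le_two).const_mul (-2 * φ)).add (integrable_const (φ ^ 2))
    rw [integral_add hYc.integrable_sq i2,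
      integral_add ((hYc.integrable one_le_two).const_mul (-2 * φ)) (integrable_const (φ ^ 2)),
      integral_const_mul, hμ, integral_const]
    simp only [probReal_univ, measure_univ, ENNReal.toReal_one, smul_eq_mul, one_mul]
    ring
  -- Z is L²
  have hAmem : MemLp A 2 ℙ := by
    have hAind : A = S.indicator (fun _ => (1 : ℝ)) := by
      funext ω
      rcases hA ω with h | h
      · have hns : ω ∉ S := by simp [hSdef, h]
        simp [h, Set.indicator_of_notMem hns]
      · have hs : ω ∈ S := h
        simp [h, Set.indicator_of_mem hs]
    rw [hAind]
    exact (memLp_const 1).indicator hS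
  have hZmem : MemLp Z 2 ℙ := by
    have hZeq : Z = fun ω => A ω * Y ω + (-φ) * A ω := by
      funext ω; simp [hZdef]; ring
    rw [hZeq]
    exact hL2.add (hAmem.const_mul _)
  have hVZ : variance Z ℙ
      = e * (variance Y (ℙ[|S]) + (μ - φ) ^ 2) - (e * (μ - φ)) ^ 2 := by
    rw [variance_eq_sub hZmem]
    simp only [Pi.pow_apply]
    rw [hEZ2, hvar, hEZ]
  -- rewrite ψ
  have hψ : (fun ω => φ + (A ω / e) * (Y ω - φ)) = fun ω => φ + (1 / e) * Z ω := by
    funext ω; simp [hZdef]; ring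
  have hVψ : variance (fun ω => φ + (A ω / e) * (Y ω - φ)) ℙ
      = (1 / e) ^ 2 * variance Z ℙ := by
    rw [hψ, variance_affine φ (1 / e) hZmem]
  have hd2 : (μ - φ) ^ 2 ≤ δ ^ 2 := by
    have h := abs_le.mp hδ
    nlinarith [h.1, h.2]
  have hVnn : 0 ≤ variance Y (ℙ[|S]) := variance_nonneg _ _
  constructor
  · rw [hVψ, hVZ]
    have key : (1 / e) ^ 2 * (e * (variance Y (ℙ[|S]) + (μ - φ) ^ 2) - (e * (μ - φ)) ^ 2)
        = variance Y (ℙ[|S]) / e + (μ - φ) ^ 2 * (1 - e) / e := by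
      field_simp
      ring
    rw [key]
    have hrhs : (σ ^ 2 + δ ^ 2 * (1 - e) / e) * (1 / e)
        = σ ^ 2 / e + δ ^ 2 * (1 - e) / e ^ 2 := by
      field_simp
    rw [hrhs]
    have h1 : variance Y (ℙ[|S]) / e ≤ σ ^ 2 / e := by gcongr
    have h2 : (μ - φ) ^ 2 * (1 - e) / e ≤ δ ^ 2 * (1 - e) / e ^ 2 := by
      apply div_le_div₀ (mul_nonneg (sq_nonneg δ) (by linarith))
        (mul_le_mul_of_nonneg_right hd2 (by linarith)) (by positivity) (by nlinarith)
    linarith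
  · have hlhs : (σ ^ 2 + δ ^ 2 * (1 - e) / e) * (1 / e)
        = (e * σ ^ 2 + δ ^ 2 * (1 - e)) / e ^ 2 := by
      field_simp
    rw [hlhs]
    have hnum : e * σ ^ 2 + δ ^ 2 * (1 - e) ≤ σ ^ 2 + δ ^ 2 := by
      nlinarith [sq_nonneg σ, sq_nonneg δ]
    exact div_le_div₀ (by positivity) hnum (by positivity) le_rfl
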